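/- Let A, E be F_q-subspaces of F_{q^m} of dimensions d and r with dim(A.E) = rd, S ⊆ A.E a subspace of dimension rd - c with c ≤ d - 2, and suppose m ≥ rd - c + d - 1. Then for every nonzero b ∈ E, |(S·b^{-1}) ∩ A| ≥ q^{d-c}, while the lower bound max(1, rd - c + d - m) on dim(S·x^{-1} ∩ A) for a general element x covered by some S·a^{-1} equals 1. -/

import Mathlib

open Submodule Module

/-- The product space A.E: the F_q-span of all products a*e with a ∈ A, e ∈ E. -/
def prodSpace (Fq : Type*) {K : Type*} [Field Fq] [Field K] [Algebra Fq K]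
    (A E : Submodule Fq K) : Submodule Fq K :=
  Submodule.span Fq {x : K | ∃ a ∈ A, ∃ e ∈ E, x = a * e}

/-! Since `A · b ⊆ A.E`, both `S · b⁻¹` and `A` lie in the translate `(A.E) · b⁻¹`, which has
dimension `rd`; the dimension formula for `S · b⁻¹ ⊓ A` then gives `rd - c + d - rd = d - c`. -/

theorem Submodule.finrank_add_finrank_le_finrank_add_finrank_inf {K V : Type*} [DivisionRing K]
    [AddCommGroup V] [Module K V] [FiniteDimensional K V] {S A T : Submodule K V}
    (hS : S ≤ T) (hA : A ≤ T) :
    finrank K S + finrank K A ≤ finrank K T + finrank K (S ⊓ A : Submodule K V) := by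
  rw [← finrank_sup_add_finrank_inf_eq]
  exact Nat.add_le_add_right (finrank_mono (sup_le hS hA)) _

section MulRight

variable {Fq K : Type*} [Field Fq] [Field K] [Algebra Fq K]

theorem finrank_map_mulRight_of_ne_zero {b : K} (hb : b ≠ 0) (S : Submodule Fq K) :
    finrank Fq (S.map (LinearMap.mulRight Fq b)) = finrank Fq S :=
  (S.equivMapOfInjective _ (mul_left_injective₀ hb)).finrank_eq.symm

theorem le_map_mulRight_inv_prodSpace {A E : Submodule Fq K} {b : K} (hb : b ∈ E) (hb0 : b ≠ 0) :
    A ≤ (prodSpace Fq A E).map (LinearMap.mulRight Fq b⁻¹) := fun a ha =>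
  ⟨a * b, subset_span ⟨a, ha, b, hb, rfl⟩, by simp [mul_assoc, mul_inv_cancel₀ hb0]⟩

end MulRight

theorem stmt16_general (Fq K : Type*) [Field Fq] [Fintype Fq] [Field K] [Algebra Fq K]
    [FiniteDimensional Fq K]
    (A E S : Submodule Fq K) (d r c : ℕ)
    (hA : finrank Fq A = d)
    (hAE : finrank Fq (prodSpace Fq A E) = r * d)
    (hSle : S ≤ prodSpace Fq A E)
    (hS : finrank Fq S + c = r * d)
    (hm : r * d - c + d - 1 ≤ finrank Fq K) :
    (∀ b ∈ E, b ≠ 0 →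
      Fintype.card Fq ^ (d - c)
        ≤ Nat.card ((S.map (LinearMap.mulRight Fq b⁻¹)) ⊓ A : Submodule Fq K))
    ∧ max 1 (r * d - c + d - finrank Fq K) = 1 := by
  refine ⟨fun b hb hb0 => ?_, by omega⟩
  have hdim : d - c ≤ finrank Fq ((S.map (LinearMap.mulRight Fq b⁻¹)) ⊓ A : Submodule Fq K) := by
    have key := finrank_add_finrank_le_finrank_add_finrank_inf
      (map_mono (f := LinearMap.mulRight Fq b⁻¹) hSle) (le_map_mulRight_inv_prodSpace hb hb0)
    rw [finrank_map_mulRight_of_ne_zero (inv_ne_zero hb0),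
      finrank_map_mulRight_of_ne_zero (inv_ne_zero hb0), hA, hAE] at key
    omega
  rw [natCard_eq_pow_finrank (K := Fq), Nat.card_eq_fintype_card]
  exact Nat.pow_le_pow_right Fintype.card_pos hdim

theorem stmt16 (Fq K : Type*) [Field Fq] [Fintype Fq] [Field K] [Algebra Fq K]
    [FiniteDimensional Fq K]
    (A E S : Submodule Fq K) (d r c : ℕ)
    (hA : finrank Fq A = d) (hE : finrank Fq E = r)
    (hAE : finrank Fq (prodSpace Fq A E) = r * d)
    (hSle : S ≤ prodSpace Fq A E)
    (hS : finrank Fq S + c = r * d)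
    (hc : c + 2 ≤ d)
    (hm : r * d - c + d - 1 ≤ finrank Fq K) :
    (∀ b ∈ E, b ≠ 0 →
      Fintype.card Fq ^ (d - c)
        ≤ Nat.card ((S.map (LinearMap.mulRight Fq b⁻¹)) ⊓ A : Submodule Fq K))
    ∧ max 1 (r * d - c + d - finrank Fq K) = 1 :=
  stmt16_general Fq K A E S d r c hA hAE hSle hS hm
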